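/- arXiv:1412.5855 — 5 statements merged into one kernel-verified Lean document; each statement's English description precedes it below -/
import Mathlib

section
/- Suppose F : ℝ → [0,∞) is bounded, continuous, and nondecreasing and satisfies: (i) sup_x |F(x+ε) − F(x)|·|log ε| → 0 as ε → 0⁺; (ii) sup_x |F(x−ε) − F(x)|·|log ε| → 0 as ε → 0⁺; (iii) there is C > 0 with ∫₀¹ (F(x+y) − F(x))/y dy ≤ C for all x; (iv) ∫₀¹ (F(x) − F(x−y))/y dy ≤ C for all x. Then H⁺(dF) = ∫_ℝ ( ∫₀¹ (F(x+y) − F(x−y))/y dy ) dF(x), and in particular H⁺(dF) < ∞. -/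
open MeasureTheory Set
open scoped ENNReal

/-- `log⁺ t = max (log t) 0`. -/
noncomputable def logPlus (t : ℝ) : ℝ := max (Real.log t) 0

/-- The kernel `log⁺ (1/|x-y|)`, valued in `ℝ≥0∞` (it equals `∞` on the diagonal). -/
noncomputable def logKernel (x y : ℝ) : ℝ≥0∞ :=
  if x = y then ⊤ else ENNReal.ofReal (logPlus (1 / |x - y|))

/-- Positive logarithmic energy of a nonnegative measure `μ` on `ℝ`:
`H⁺(μ) = ∫∫ log⁺(1/|x-y|) dμ(x) dμ(y)`. -/
noncomputable def HplusM (μ : Measure ℝ) : ℝ≥0∞ :=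
  ∫⁻ x, ∫⁻ y, logKernel x y ∂μ ∂μ

/-!
Writing `log⁺ (1/r) = ∫_{(r,1]} dt/t`, Tonelli turns the inner integral `∫ log⁺ (1/|x-y|) dμ(y)`
into `∫_{(0,1]} μ(x-t, x+t) dt/t`; this needs the diagonal to be `μ ⊗ μ`-null, which holds because
a continuous `F` gives an atomless `dF`. For `dF` the mass of `(x-t, x+t)` is `F(x+t) - F(x-t)`,
and splitting this difference at `x`, (iii) and (iv) bound the inner integral by `2C`, while `dF`
is a finite measure since `F` is bounded.
-/

lemma ofReal_logPlus_one_div {r : ℝ} (hr : 0 < r) :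
    ENNReal.ofReal (logPlus (1 / r)) = ∫⁻ t in Ioc r 1, ENNReal.ofReal (1 / t) := by
  rcases le_or_gt 1 r with h1r | hr1
  · rw [Ioc_eq_empty h1r.not_gt, Measure.restrict_empty, lintegral_zero_measure, logPlus,
      max_eq_right (Real.log_nonpos (by positivity) ((div_le_one hr).2 h1r)), ENNReal.ofReal_zero]
  · have hint : IntegrableOn (fun t : ℝ => 1 / t) (Ioc r 1) :=
      (intervalIntegral.intervalIntegrable_one_div (fun t ht => by
        rw [uIcc_of_le hr1.le] at ht; exact (hr.trans_le ht.1).ne') continuousOn_id).1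
    rw [← ofReal_integral_eq_lintegral_ofReal hint, ← intervalIntegral.integral_of_le hr1.le,
      integral_one_div_of_pos hr one_pos, logPlus,
      max_eq_left (Real.log_nonneg ((one_le_div hr).2 hr1.le))]
    · filter_upwards [ae_restrict_mem measurableSet_Ioc] with t ht
      exact one_div_nonneg.2 (hr.trans ht.1).le

lemma logKernel_eq_lintegral_indicator {x y : ℝ} (hxy : x ≠ y) :
    logKernel x y = ∫⁻ t in Ioc 0 1,
      (Ioo (x - t) (x + t)).indicator (fun _ => ENNReal.ofReal (1 / t)) y := by
  have hr : 0 < |x - y| := abs_pos.2 (sub_ne_zero.2 hxy)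
  have hmem : ∀ t, y ∈ Ioo (x - t) (x + t) ↔ t ∈ Ioi |x - y| := fun t => by
    rw [mem_Ioo, mem_Ioi, abs_sub_lt_iff]
    constructor <;> rintro ⟨_, _⟩ <;> constructor <;> linarith
  rw [logKernel, if_neg hxy, ofReal_logPlus_one_div hr, ← max_eq_right hr.le, ← Ioc_inter_Ioi,
    inter_comm, ← setLIntegral_indicator measurableSet_Ioi]
  congr 1 with t
  simp only [indicator_apply, hmem]

lemma lintegral_logKernel (μ : Measure ℝ) [SFinite μ] [NullSingletonClass μ] (x : ℝ) :
    ∫⁻ y, logKernel x y ∂μ =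
      ∫⁻ t in Ioc 0 1, ENNReal.ofReal (1 / t) * μ (Ioo (x - t) (x + t)) := by
  have hae : ∀ᵐ y ∂μ, logKernel x y = ∫⁻ t in Ioc 0 1,
      (Ioo (x - t) (x + t)).indicator (fun _ => ENNReal.ofReal (1 / t)) y := by
    filter_upwards [μ.ae_ne x] with y hy
    exact logKernel_eq_lintegral_indicator (Ne.symm hy)
  have hmeas : Measurable fun p : ℝ × ℝ =>
      (Ioo (x - p.2) (x + p.2)).indicator (fun _ => ENNReal.ofReal (1 / p.2)) p.1 := by
    have hset : MeasurableSet ({p : ℝ × ℝ | x - p.2 < p.1} ∩ {p | p.1 < x + p.2}) :=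
      (measurableSet_lt (by fun_prop) (by fun_prop)).inter
        (measurableSet_lt (by fun_prop) (by fun_prop))
    exact (Measurable.ennreal_ofReal (by fun_prop)).indicator hset
  rw [lintegral_congr_ae hae, lintegral_lintegral_swap hmeas.aemeasurable]
  congr 1 with t
  rw [lintegral_indicator_const measurableSet_Ioo]

lemma hplusM_eq_lintegral_measure_Ioo (μ : Measure ℝ) [SFinite μ] [NullSingletonClass μ] :
    HplusM μ = ∫⁻ x, (∫⁻ t in Ioc 0 1, ENNReal.ofReal (1 / t) * μ (Ioo (x - t) (x + t))) ∂μ :=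
  lintegral_congr (lintegral_logKernel μ)

namespace StieltjesFunction

variable (f : StieltjesFunction ℝ) (hf : Continuous f)
include hf

lemma leftLim_eq_of_continuous (x : ℝ) : Function.leftLim f x = f x :=
  f.mono.continuousWithinAt_Iio_iff_leftLim_eq.1 hf.continuousWithinAt

lemma nullSingletonClass_of_continuous : NullSingletonClass f.measure :=
  ⟨fun x => by
    rw [f.measure_singleton, f.leftLim_eq_of_continuous hf, sub_self, ENNReal.ofReal_zero]⟩

lemma measure_Ioo_of_continuous (a b : ℝ) : f.measure (Ioo a b) = ENNReal.ofReal (f b - f a) := by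
  rw [f.measure_Ioo, f.leftLim_eq_of_continuous hf]

lemma hplusM_measure_eq_of_continuous :
    HplusM f.measure =
      ∫⁻ x, (∫⁻ t in Ioc 0 1, ENNReal.ofReal ((f (x + t) - f (x - t)) / t)) ∂f.measure := by
  have := f.nullSingletonClass_of_continuous hf
  rw [hplusM_eq_lintegral_measure_Ioo]
  refine lintegral_congr fun x => setLIntegral_congr_fun measurableSet_Ioc fun t ht => ?_
  rw [f.measure_Ioo_of_continuous hf, ← ENNReal.ofReal_mul (one_div_nonneg.2 ht.1.le),
    one_div_mul_eq_div]

end StieltjesFunction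

lemma Monotone.lintegral_ofReal_sub_div_eq_add {F : ℝ → ℝ} (hF : Monotone F) (x : ℝ) :
    ∫⁻ y in Ioc 0 1, ENNReal.ofReal ((F (x + y) - F (x - y)) / y) =
      (∫⁻ y in Ioc 0 1, ENNReal.ofReal ((F (x + y) - F x) / y)) +
        ∫⁻ y in Ioc 0 1, ENNReal.ofReal ((F x - F (x - y)) / y) := by
  have hright : Measurable fun y => ENNReal.ofReal ((F (x + y) - F x) / y) :=
    (((hF.comp (monotone_id.const_add x)).measurable.sub_const _).div measurable_id).ennreal_ofReal
  rw [← lintegral_add_left hright]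
  refine setLIntegral_congr_fun measurableSet_Ioc fun y hy => ?_
  rw [← ENNReal.ofReal_add (div_nonneg (sub_nonneg.2 (hF (by linarith [hy.1]))) hy.1.le)
    (div_nonneg (sub_nonneg.2 (hF (by linarith [hy.1]))) hy.1.le), ← add_div, sub_add_sub_cancel]

theorem hplusM_eq_of_uniform_conditions_general (F : ℝ → ℝ) (C : ℝ)
    (hF0 : ∀ x, 0 ≤ F x) (hcont : Continuous F) (hmono : Monotone F)
    (hbdd : ∃ M : ℝ, ∀ x, F x ≤ M)
    (hiii : ∀ x : ℝ,
      ∫⁻ y in Set.Ioc (0:ℝ) 1, ENNReal.ofReal ((F (x + y) - F x) / y) ≤ ENNReal.ofReal C)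
    (hiv : ∀ x : ℝ,
      ∫⁻ y in Set.Ioc (0:ℝ) 1, ENNReal.ofReal ((F x - F (x - y)) / y) ≤ ENNReal.ofReal C)
    (μ : Measure ℝ)
    (hμ : ∀ a b : ℝ, a ≤ b → μ (Set.Ioc a b) = ENNReal.ofReal (F b - F a)) :
    HplusM μ =
      (∫⁻ x, (∫⁻ y in Set.Ioc (0:ℝ) 1, ENNReal.ofReal ((F (x + y) - F (x - y)) / y)) ∂μ)
    ∧ HplusM μ < ⊤ := by
  let f : StieltjesFunction ℝ := ⟨F, hmono, fun x => hcont.continuousWithinAt⟩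
  obtain rfl : f.measure = μ :=
    Measure.ext_of_Ioc _ _ fun a b hab => (f.measure_Ioc a b).trans (hμ a b hab.le).symm
  obtain ⟨M, hM⟩ := hbdd
  have : IsFiniteMeasure f.measure := f.isFiniteMeasure_of_forall_abs_le fun x =>
    abs_le.2 ⟨by linarith [hF0 x, hM x], hM x⟩
  have henergy := f.hplusM_measure_eq_of_continuous hcont
  refine ⟨henergy, ?_⟩
  rw [henergy]
  refine IsFiniteMeasure.lintegral_lt_top_of_bounded_to_ennreal f.measure
    ⟨2 * C.toNNReal, fun x => ?_⟩
  rw [hmono.lintegral_ofReal_sub_div_eq_add x, ENNReal.coe_mul, ENNReal.coe_ofNat, two_mul]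
  exact add_le_add (hiii x) (hiv x)

/-- Suppose `F : ℝ → [0,∞)` is bounded, continuous and nondecreasing, and satisfies
(i) `(F (x+ε) - F x)·|log ε| → 0` as `ε → 0⁺` uniformly in `x`,
(ii) `(F x - F (x-ε))·|log ε| → 0` as `ε → 0⁺` uniformly in `x`,
(iii) `∫₀¹ (F (x+y) - F x)/y dy ≤ C` uniformly in `x`,
(iv) `∫₀¹ (F x - F (x-y))/y dy ≤ C` uniformly in `x`.
Then for the Lebesgue–Stieltjes measure `dF` (characterized by `dF((a,b]) = F b - F a`)
one has `H⁺(dF) = ∫_ℝ (∫₀¹ (F (x+y) - F (x-y))/y dy) dF(x)`, and in particular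
`H⁺(dF) < ∞`. -/
theorem hplusM_eq_of_uniform_conditions (F : ℝ → ℝ) (C : ℝ) (hC : 0 < C)
    (hF0 : ∀ x, 0 ≤ F x) (hcont : Continuous F) (hmono : Monotone F)
    (hbdd : ∃ M : ℝ, ∀ x, F x ≤ M)
    (hi : ∀ δ : ℝ, 0 < δ → ∃ ε₀ : ℝ, 0 < ε₀ ∧ ∀ ε : ℝ, 0 < ε → ε < ε₀ →
      ∀ x : ℝ, (F (x + ε) - F x) * |Real.log ε| < δ)
    (hii : ∀ δ : ℝ, 0 < δ → ∃ ε₀ : ℝ, 0 < ε₀ ∧ ∀ ε : ℝ, 0 < ε → ε < ε₀ →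
      ∀ x : ℝ, (F x - F (x - ε)) * |Real.log ε| < δ)
    (hiii : ∀ x : ℝ,
      ∫⁻ y in Set.Ioc (0:ℝ) 1, ENNReal.ofReal ((F (x + y) - F x) / y) ≤ ENNReal.ofReal C)
    (hiv : ∀ x : ℝ,
      ∫⁻ y in Set.Ioc (0:ℝ) 1, ENNReal.ofReal ((F x - F (x - y)) / y) ≤ ENNReal.ofReal C)
    (μ : Measure ℝ)
    (hμ : ∀ a b : ℝ, a ≤ b → μ (Set.Ioc a b) = ENNReal.ofReal (F b - F a)) :
    HplusM μ =
      (∫⁻ x, (∫⁻ y in Set.Ioc (0:ℝ) 1, ENNReal.ofReal ((F (x + y) - F (x - y)) / y)) ∂μ)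
    ∧ HplusM μ < ⊤ :=
  hplusM_eq_of_uniform_conditions_general F C hF0 hcont hmono hbdd hiii hiv μ hμ
end

section
/- Let F : ℝ → [0,∞) be bounded, continuous, and nondecreasing, and suppose there exist β > 1 and ε > 0 such that |F(x+y) − F(x)| ≤ 1/|log|y||^β for all x ∈ ℝ and all y with 0 < |y| ≤ ε. Then H⁺(dF) = ∫_ℝ ∫_ℝ log⁺(1/|x−y|) dF(x) dF(y) < ∞. -/
open MeasureTheory Set
open scoped ENNReal

/-!
`log⁺ (1/|x - y|)` is at most the number of `k : ℕ` with `|x - y| < e^{-k}` (also on the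
diagonal, where both are `∞`, so atoms need no separate treatment); hence the inner integral is
at most `∑ₖ dF(B(x, e^{-k}))`. For large `k` the modulus of continuity bounds
`dF(B(x, e^{-k}))` by `2 / k^β`, which is summable since `β > 1`; the finitely many remaining
terms are bounded by the total mass. The bound is uniform in `x`, so integrating once more
against the finite measure `dF` gives `H⁺(dF) < ∞`.
-/

lemma logKernel_le_tsum_indicator_ball (x y : ℝ) :
    logKernel x y ≤
      ∑' k : ℕ, (Metric.ball x (Real.exp (-k))).indicator (1 : ℝ → ℝ≥0∞) y := by
  rcases eq_or_ne x y with rfl | hxy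
  · simp [logKernel, indicator_of_mem (Metric.mem_ball_self (Real.exp_pos _))]
  rw [logKernel, if_neg hxy, logPlus]
  have hdist : 0 < |x - y| := abs_pos.mpr (sub_ne_zero.mpr hxy)
  set L := Real.log (1 / |x - y|) with hL
  have hlog : Real.log |x - y| = -L := by rw [hL, one_div, Real.log_inv, neg_neg]
  have hmem : ∀ k ∈ Finset.range ⌈L⌉₊, y ∈ Metric.ball x (Real.exp (-k)) := by
    intro k hk
    have hkL : (k : ℝ) < L := Nat.lt_ceil.mp (Finset.mem_range.mp hk)
    rw [Metric.mem_ball, dist_comm, Real.dist_eq, ← Real.exp_log hdist]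
    exact Real.exp_lt_exp.mpr (by linarith)
  calc ENNReal.ofReal (max L 0) ≤ (⌈L⌉₊ : ℝ≥0∞) := by
        rw [← ENNReal.ofReal_natCast]
        exact ENNReal.ofReal_le_ofReal (max_le (Nat.le_ceil L) (Nat.cast_nonneg _))
    _ = ∑ k ∈ Finset.range ⌈L⌉₊,
          (Metric.ball x (Real.exp (-k))).indicator (1 : ℝ → ℝ≥0∞) y := by
        rw [Finset.sum_congr rfl fun k hk => indicator_of_mem (hmem k hk) _]
        simp
    _ ≤ _ := ENNReal.sum_le_tsum _

lemma lintegral_logKernel_le_tsum_measure_ball (μ : Measure ℝ) (x : ℝ) :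
    ∫⁻ y, logKernel x y ∂μ ≤ ∑' k : ℕ, μ (Metric.ball x (Real.exp (-k))) :=
  calc ∫⁻ y, logKernel x y ∂μ
      ≤ ∫⁻ y, ∑' k : ℕ, (Metric.ball x (Real.exp (-k))).indicator 1 y ∂μ :=
        lintegral_mono (logKernel_le_tsum_indicator_ball x)
    _ = ∑' k : ℕ, μ (Metric.ball x (Real.exp (-k))) := by
        rw [lintegral_tsum fun k => (measurable_one.indicator measurableSet_ball).aemeasurable]
        simp_rw [lintegral_indicator_one measurableSet_ball]

lemma HplusM_le_mul_measure_univ {μ : Measure ℝ} {C : ℝ≥0∞}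
    (hC : ∀ x, ∑' k : ℕ, μ (Metric.ball x (Real.exp (-k))) ≤ C) :
    HplusM μ ≤ C * μ univ :=
  calc HplusM μ ≤ ∫⁻ _, C ∂μ :=
        lintegral_mono fun x => (lintegral_logKernel_le_tsum_measure_ball μ x).trans (hC x)
    _ = C * μ univ := lintegral_const C

lemma measure_univ_le_of_forall_measure_Ioc_le {μ : Measure ℝ} {c : ℝ≥0∞}
    (h : ∀ a b, a ≤ b → μ (Ioc a b) ≤ c) : μ univ ≤ c := by
  have hcover : ⋃ n : ℕ, Ioc (-(n : ℝ)) n = univ := by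
    refine iUnion_eq_univ_iff.mpr fun y => ?_
    obtain ⟨n, hn⟩ := exists_nat_gt |y|
    exact ⟨n, by linarith [neg_abs_le y], by linarith [le_abs_self y]⟩
  have hmono : Monotone fun n : ℕ => Ioc (-(n : ℝ)) n := fun m n hmn =>
    Ioc_subset_Ioc (neg_le_neg (Nat.cast_le.mpr hmn)) (Nat.cast_le.mpr hmn)
  rw [← hcover, hmono.directed_le.measure_iUnion]
  exact iSup_le fun n => h _ _ (by linarith [(n.cast_nonneg : (0 : ℝ) ≤ n)])

lemma measure_ball_le_ofReal_sub {F : ℝ → ℝ} {μ : Measure ℝ}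
    (hμ : ∀ a b : ℝ, a ≤ b → μ (Ioc a b) = ENNReal.ofReal (F b - F a)) (x : ℝ) {r : ℝ}
    (hr : 0 ≤ r) : μ (Metric.ball x r) ≤ ENNReal.ofReal (F (x + r) - F (x - r)) := by
  rw [← hμ _ _ (by linarith), Real.ball_eq_Ioo]
  exact measure_mono Ioo_subset_Ioc_self

lemma sub_le_of_log_modulus {F : ℝ → ℝ} {β ε : ℝ}
    (hmodulus : ∀ x y : ℝ, 0 < |y| → |y| ≤ ε →
      |F (x + y) - F x| ≤ 1 / |Real.log (abs y)| ^ β)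
    (x : ℝ) {r : ℝ} (hr : 0 < r) (hrε : r ≤ ε) :
    F (x + r) - F (x - r) ≤ 2 / |Real.log r| ^ β := by
  have habs : |r| = r := abs_of_pos hr
  have hright := hmodulus x r (by rwa [habs]) (by rwa [habs])
  have hleft := hmodulus (x - r) r (by rwa [habs]) (by rwa [habs])
  rw [habs] at hright hleft
  rw [sub_add_cancel] at hleft
  calc F (x + r) - F (x - r) = (F (x + r) - F x) + (F x - F (x - r)) := by ring
    _ ≤ 1 / |Real.log r| ^ β + 1 / |Real.log r| ^ β :=
        add_le_add ((le_abs_self _).trans hright) ((le_abs_self _).trans hleft)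
    _ = 2 / |Real.log r| ^ β := by ring

lemma measure_ball_exp_neg_le_of_log_modulus {F : ℝ → ℝ} {μ : Measure ℝ} {β ε : ℝ}
    (hμ : ∀ a b : ℝ, a ≤ b → μ (Ioc a b) = ENNReal.ofReal (F b - F a))
    (hmodulus : ∀ x y : ℝ, 0 < |y| → |y| ≤ ε →
      |F (x + y) - F x| ≤ 1 / |Real.log (abs y)| ^ β)
    (x : ℝ) {k : ℕ} (hk : Real.exp (-k) ≤ ε) :
    μ (Metric.ball x (Real.exp (-k))) ≤ ENNReal.ofReal (2 / (k : ℝ) ^ β) := by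
  have hmod := sub_le_of_log_modulus hmodulus x (Real.exp_pos _) hk
  rw [Real.log_exp, abs_neg, Nat.abs_cast] at hmod
  exact (measure_ball_le_ofReal_sub hμ x (Real.exp_pos _).le).trans
    (ENNReal.ofReal_le_ofReal hmod)

lemma ENNReal.tsum_ite_lt_ne_top {a : ℝ≥0∞} {f : ℕ → ℝ≥0∞} (N : ℕ) (ha : a ≠ ⊤)
    (hf : ∑' k, f k ≠ ⊤) : ∑' k, (if k < N then a else f k) ≠ ⊤ := by
  have hsplit : ∀ k, (if k < N then a else f k) ≤ (if k < N then a else 0) + f k := by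
    intro k
    split_ifs <;> simp
  have hfinite : ∑' k, (if k < N then a else 0) = ∑ k ∈ Finset.range N, a :=
    (tsum_eq_sum fun k hk => if_neg (Finset.mem_range.not.mp hk)).trans
      (Finset.sum_congr rfl fun k hk => if_pos (Finset.mem_range.mp hk))
  refine ne_top_of_le_ne_top ?_ (ENNReal.tsum_le_tsum hsplit)
  rw [ENNReal.tsum_add, hfinite]
  exact ENNReal.add_ne_top.mpr ⟨ENNReal.sum_ne_top.mpr fun _ _ => ha, hf⟩

theorem hplusM_lt_top_of_log_modulus_general (F : ℝ → ℝ) (β ε : ℝ)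
    (hβ : 1 < β) (hε : 0 < ε)
    (hF0 : ∀ x, 0 ≤ F x)
    (hbdd : ∃ M : ℝ, ∀ x, F x ≤ M)
    (hmodulus : ∀ x y : ℝ, 0 < |y| → |y| ≤ ε →
      |F (x + y) - F x| ≤ 1 / |Real.log (abs y)| ^ β)
    (μ : Measure ℝ)
    (hμ : ∀ a b : ℝ, a ≤ b → μ (Set.Ioc a b) = ENNReal.ofReal (F b - F a)) :
    HplusM μ < ⊤ := by
  obtain ⟨M, hM⟩ := hbdd
  have hmass : μ univ ≤ ENNReal.ofReal M :=
    measure_univ_le_of_forall_measure_Ioc_le fun a b hab =>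
      (hμ a b hab).trans_le (ENNReal.ofReal_le_ofReal (by linarith [hM b, hF0 a]))
  have hmass_ne_top : μ univ ≠ ⊤ := ne_top_of_le_ne_top ENNReal.ofReal_ne_top hmass
  obtain ⟨N, hN⟩ := Filter.eventually_atTop.mp <|
    (Real.tendsto_exp_neg_atTop_nhds_zero.comp tendsto_natCast_atTop_atTop).eventually
      (ge_mem_nhds hε)
  have hball : ∀ x, ∑' k : ℕ, μ (Metric.ball x (Real.exp (-k))) ≤
      ∑' k : ℕ, if k < N then μ univ else ENNReal.ofReal (2 / (k : ℝ) ^ β) := by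
    refine fun x => ENNReal.tsum_le_tsum fun k => ?_
    split_ifs with hk
    · exact measure_mono (subset_univ _)
    · exact measure_ball_exp_neg_le_of_log_modulus hμ hmodulus x (hN k (not_lt.mp hk))
  have hsummable : Summable fun k : ℕ => 2 / (k : ℝ) ^ β := by
    simpa [div_eq_mul_inv] using (Real.summable_one_div_nat_rpow.mpr hβ).mul_left 2
  have hsum : (∑' k : ℕ, if k < N then μ univ else ENNReal.ofReal (2 / (k : ℝ) ^ β)) ≠ ⊤ :=
    ENNReal.tsum_ite_lt_ne_top N hmass_ne_top hsummable.tsum_ofReal_ne_top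
  exact (HplusM_le_mul_measure_univ hball).trans_lt
    (ENNReal.mul_lt_top hsum.lt_top hmass_ne_top.lt_top)

/-- If `F : ℝ → [0,∞)` is bounded, continuous and nondecreasing, and there are `β > 1`
and `ε > 0` such that `|F (x+y) - F x| ≤ 1/|log |y||^β` for all `x` and all `y` with
`0 < |y| ≤ ε`, then the Lebesgue–Stieltjes measure `dF` (characterized by
`dF((a,b]) = F b - F a`) has finite positive logarithmic energy. -/
theorem hplusM_lt_top_of_log_modulus (F : ℝ → ℝ) (β ε : ℝ)
    (hβ : 1 < β) (hε : 0 < ε)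
    (hF0 : ∀ x, 0 ≤ F x) (hcont : Continuous F) (hmono : Monotone F)
    (hbdd : ∃ M : ℝ, ∀ x, F x ≤ M)
    (hmodulus : ∀ x y : ℝ, 0 < |y| → |y| ≤ ε →
      |F (x + y) - F x| ≤ 1 / |Real.log (abs y)| ^ β)
    (μ : Measure ℝ)
    (hμ : ∀ a b : ℝ, a ≤ b → μ (Set.Ioc a b) = ENNReal.ofReal (F b - F a)) :
    HplusM μ < ⊤ :=
  hplusM_lt_top_of_log_modulus_general F β ε hβ hε hF0 hbdd hmodulus μ hμ
end

section
/- Let (a_n), (h_n), (d_n) be sequences with h_n > 0, 0 < d_n ≤ 1, and a_n + d_n ≤ a_{n+1} for all n ≥ 1, and let f = Σ_{n=1}^∞ h_n·1_{[a_n, a_n+d_n]}. Then H⁺(f) ≥ Σ_{n=1}^∞ h_n² d_n² log(1/d_n). -/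
open MeasureTheory Set
open scoped ENNReal

/-- Positive logarithmic energy of a nonnegative function `f : ℝ → ℝ`:
`H⁺(f) = ∫∫ log⁺(1/|x-y|) f(x) f(y) dx dy`. -/
noncomputable def Hplus (f : ℝ → ℝ) : ℝ≥0∞ :=
  ∫⁻ x, ∫⁻ y, logKernel x y * ENNReal.ofReal (f x) * ENNReal.ofReal (f y)

/-! The kernel and all weights are nonnegative, so discarding the interaction between different
steps only lowers the energy: `H⁺(Σ gₙ) ≥ Σ H⁺(gₙ)`. On `Iₙ × Iₙ` one has `|x - y| ≤ dₙ`, so the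
kernel is at least `log (1/dₙ)` there and `H⁺(hₙ 1_{Iₙ}) ≥ log (1/dₙ) (hₙ dₙ)²`. The separation
`aₙ + dₙ ≤ aₙ₊₁` makes the series defining `f` locally finite, hence summable, so it can be moved
into `ℝ≥0∞` termwise. -/

namespace MeasureTheory

variable {α : Type*} [MeasurableSpace α] {μ : Measure α}

theorem finsetSum_lintegral_le_lintegral_finsetSum {ι : Type*} (s : Finset ι)
    (F : ι → α → ℝ≥0∞) : ∑ i ∈ s, ∫⁻ a, F i a ∂μ ≤ ∫⁻ a, ∑ i ∈ s, F i a ∂μ := by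
  classical
  induction s using Finset.induction_on with
  | empty => simp
  | insert i s hi ih =>
    simp only [Finset.sum_insert hi]
    exact (add_le_add_right ih _).trans (le_lintegral_add _ _)

theorem tsum_lintegral_le_lintegral_tsum {ι : Type*} (F : ι → α → ℝ≥0∞) :
    ∑' i, ∫⁻ a, F i a ∂μ ≤ ∫⁻ a, ∑' i, F i a ∂μ := by
  rw [ENNReal.tsum_eq_iSup_sum]
  exact iSup_le fun s => (finsetSum_lintegral_le_lintegral_finsetSum s F).trans
    (lintegral_mono fun a => ENNReal.sum_le_tsum s)

end MeasureTheory

noncomputable def kernelEnergy {α : Type*} [MeasurableSpace α] (μ : Measure α)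
    (K : α → α → ℝ≥0∞) (g : α → ℝ≥0∞) : ℝ≥0∞ :=
  ∫⁻ x, ∫⁻ y, K x y * g x * g y ∂μ ∂μ

section kernelEnergy

variable {α : Type*} [MeasurableSpace α] {μ : Measure α} {K : α → α → ℝ≥0∞}

theorem tsum_kernelEnergy_le_kernelEnergy_tsum {ι : Type*} (g : ι → α → ℝ≥0∞) :
    ∑' i, kernelEnergy μ K (g i) ≤ kernelEnergy μ K fun x => ∑' i, g i x := by
  have diagonal_le : ∀ x y, ∑' i, g i x * g i y ≤ (∑' i, g i x) * ∑' j, g j y := fun x y =>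
    calc ∑' i, g i x * g i y ≤ ∑' i, g i x * ∑' j, g j y :=
          ENNReal.tsum_le_tsum fun i => mul_le_mul_right (ENNReal.le_tsum i) _
      _ = (∑' i, g i x) * ∑' j, g j y := ENNReal.tsum_mul_right
  calc ∑' i, kernelEnergy μ K (g i)
      ≤ ∫⁻ x, ∑' i, ∫⁻ y, K x y * g i x * g i y ∂μ ∂μ := tsum_lintegral_le_lintegral_tsum _
    _ ≤ ∫⁻ x, ∫⁻ y, ∑' i, K x y * g i x * g i y ∂μ ∂μ :=
        lintegral_mono fun x => tsum_lintegral_le_lintegral_tsum _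
    _ ≤ kernelEnergy μ K fun x => ∑' i, g i x := by
        refine lintegral_mono fun x => lintegral_mono fun y => ?_
        simp only [mul_assoc, ENNReal.tsum_mul_left]
        gcongr
        exact diagonal_le x y

theorem mul_sq_le_kernelEnergy_indicator {s : Set α} (hs : MeasurableSet s) {c : ℝ≥0∞}
    (hK : ∀ x ∈ s, ∀ y ∈ s, c ≤ K x y) (b : ℝ≥0∞) :
    c * (b * μ s) ^ 2 ≤ kernelEnergy μ K (s.indicator fun _ => b) := by
  have pointwise : ∀ x y, s.indicator (fun _ => c * b) x * s.indicator (fun _ => b) y ≤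
      K x y * s.indicator (fun _ => b) x * s.indicator (fun _ => b) y := by
    intro x y
    by_cases hx : x ∈ s
    · by_cases hy : y ∈ s
      · simp only [indicator_of_mem hx, indicator_of_mem hy, mul_assoc]
        gcongr
        exact hK x hx y hy
      · simp [hy]
    · simp [hx]
  calc c * (b * μ s) ^ 2
      = ∫⁻ x, s.indicator (fun _ => c * b) x * (b * μ s) ∂μ := by
        rw [lintegral_mul_const _ (measurable_const.indicator hs), lintegral_indicator_const hs]
        ring
    _ = ∫⁻ x, ∫⁻ y, s.indicator (fun _ => c * b) x * s.indicator (fun _ => b) y ∂μ ∂μ := by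
        simp_rw [lintegral_const_mul _ (measurable_const.indicator hs),
          lintegral_indicator_const hs]
    _ ≤ kernelEnergy μ K (s.indicator fun _ => b) :=
        lintegral_mono fun x => lintegral_mono fun y => pointwise x y

end kernelEnergy

theorem ofReal_log_inv_le_logKernel {δ : ℝ} (hδ : 0 < δ) {x y : ℝ} (hxy : |x - y| ≤ δ) :
    ENNReal.ofReal (Real.log (1 / δ)) ≤ logKernel x y := by
  unfold logKernel
  split_ifs with h_eq
  · exact le_top
  · have hpos : 0 < |x - y| := abs_pos.mpr (sub_ne_zero.mpr h_eq)
    refine ENNReal.ofReal_le_ofReal (le_max_of_le_left ?_)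
    exact Real.log_le_log (one_div_pos.mpr hδ) (one_div_le_one_div_of_le hpos hxy)

theorem ENNReal.ofReal_tsum_indicator {α ι : Type*} {s : ι → Set α} {h : ι → ℝ}
    (hh : ∀ i, 0 ≤ h i) {x : α} (hx : {i | x ∈ s i}.Finite) :
    ENNReal.ofReal (∑' i, (s i).indicator (fun _ => h i) x) =
      ∑' i, (s i).indicator (fun _ => ENNReal.ofReal (h i)) x := by
  have summable : Summable fun i => (s i).indicator (fun _ => h i) x :=
    summable_of_hasFiniteSupport <|
      hx.subset fun i hi => by_contra fun hxi => hi (indicator_of_notMem hxi _)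
  rw [ENNReal.ofReal_tsum_of_nonneg (fun i => indicator_nonneg (fun _ _ => hh i) x) summable]
  congr 1 with i
  exact congr_fun (indicator_comp_of_zero ENNReal.ofReal_zero).symm x

theorem finite_setOf_mem_Icc {a d : ℕ → ℝ} (hd : ∀ n, 0 < d n)
    (ha : ∀ n, a n + d n ≤ a (n + 1)) (x : ℝ) :
    {n | x ∈ Icc (a n) (a n + d n)}.Finite := by
  have a_strictMono : StrictMono a :=
    strictMono_nat_of_lt_succ fun n => by linarith [hd n, ha n]
  have le_succ_of_mem : ∀ {n m}, x ∈ Icc (a n) (a n + d n) → x ∈ Icc (a m) (a m + d m) →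
      m ≤ n + 1 := by
    intro n m hn hm
    by_contra! hlt
    linarith [a_strictMono hlt, ha n, hn.2, hm.1]
  rcases eq_empty_or_nonempty {n | x ∈ Icc (a n) (a n + d n)} with h_empty | ⟨n₀, hn₀⟩
  · exact h_empty ▸ finite_empty
  · exact (finite_Iic (n₀ + 1)).subset fun m hm => le_succ_of_mem hn₀ hm

theorem hplus_ge_sum_of_step_function_general (a h d : ℕ → ℝ)
    (hh : ∀ n, 0 < h n) (hd0 : ∀ n, 0 < d n)
    (ha : ∀ n, a n + d n ≤ a (n + 1))
    (f : ℝ → ℝ)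
    (hf : ∀ x, f x = ∑' n : ℕ, Set.indicator (Set.Icc (a n) (a n + d n)) (fun _ => h n) x) :
    ∑' n : ℕ, ENNReal.ofReal (h n ^ 2 * d n ^ 2 * Real.log (1 / d n)) ≤ Hplus f := by
  set g : ℕ → ℝ → ℝ≥0∞ := fun n =>
    (Icc (a n) (a n + d n)).indicator fun _ => ENNReal.ofReal (h n)
  have term_le : ∀ n, ENNReal.ofReal (h n ^ 2 * d n ^ 2 * Real.log (1 / d n)) ≤
      kernelEnergy volume logKernel (g n) := by
    intro n
    have h_eq : ENNReal.ofReal (h n ^ 2 * d n ^ 2 * Real.log (1 / d n)) =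
        ENNReal.ofReal (Real.log (1 / d n)) *
          (ENNReal.ofReal (h n) * volume (Icc (a n) (a n + d n))) ^ 2 := by
      rw [Real.volume_Icc, add_sub_cancel_left, ← ENNReal.ofReal_mul (hh n).le,
        ← ENNReal.ofReal_pow (mul_pos (hh n) (hd0 n)).le, ← ENNReal.ofReal_mul' (sq_nonneg _)]
      ring_nf
    rw [h_eq]
    refine mul_sq_le_kernelEnergy_indicator measurableSet_Icc (fun x hx y hy => ?_) _
    refine ofReal_log_inv_le_logKernel (hd0 n) ?_
    simpa [Real.dist_eq] using Real.dist_le_of_mem_Icc hx hy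
  have f_eq : ∀ x, ENNReal.ofReal (f x) = ∑' n, g n x := fun x => by
    rw [hf x]
    exact ENNReal.ofReal_tsum_indicator (fun n => (hh n).le) (finite_setOf_mem_Icc hd0 ha x)
  calc ∑' n, ENNReal.ofReal (h n ^ 2 * d n ^ 2 * Real.log (1 / d n))
      ≤ ∑' n, kernelEnergy volume logKernel (g n) := ENNReal.tsum_le_tsum term_le
    _ ≤ kernelEnergy volume logKernel fun x => ∑' n, g n x :=
        tsum_kernelEnergy_le_kernelEnergy_tsum g
    _ = Hplus f := by simp only [Hplus, kernelEnergy, f_eq]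

/-- For `f = Σₙ hₙ · 1_{[aₙ, aₙ + dₙ]}` with `hₙ > 0`, `0 < dₙ ≤ 1` and
`aₙ + dₙ ≤ aₙ₊₁`, one has `H⁺(f) ≥ Σₙ hₙ² dₙ² log(1/dₙ)`. -/
theorem hplus_ge_sum_of_step_function (a h d : ℕ → ℝ)
    (hh : ∀ n, 0 < h n) (hd0 : ∀ n, 0 < d n) (hd1 : ∀ n, d n ≤ 1)
    (ha : ∀ n, a n + d n ≤ a (n + 1))
    (f : ℝ → ℝ)
    (hf : ∀ x, f x = ∑' n : ℕ, Set.indicator (Set.Icc (a n) (a n + d n)) (fun _ => h n) x) :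
    ∑' n : ℕ, ENNReal.ofReal (h n ^ 2 * d n ^ 2 * Real.log (1 / d n)) ≤ Hplus f :=
  hplus_ge_sum_of_step_function_general a h d hh hd0 ha f hf
end

section
/- There exists a nonnegative, compactly supported function f ∈ L¹(ℝ) such that H⁺(f) = ∫_ℝ ∫_ℝ log⁺(1/|x−y|) f(x) f(y) dx dy = +∞. (Such an f is given by f = Σ_{n=1}^∞ h_n·1_{[a_n, a_n+d_n]} with d_n = exp(−2^{2n}), h_n = 1/(2^n d_n), and suitably chosen disjoint intervals; it satisfies ‖f‖_{L¹} = 1.) -/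
open MeasureTheory Set
open scoped ENNReal

/-!
Put mass `2⁻¹ ^ (n + 1)` uniformly on an interval of length `exp (-4 ^ (n + 1))`, the
intervals being disjoint and inside `[0, 1]`. The total mass is `1`, but on the `n`-th block
the kernel is at least `4 ^ (n + 1)`, so each block alone contributes at least
`4 ^ (n + 1) * (2⁻¹ ^ (n + 1)) ^ 2 = 1` to the energy, and there are infinitely many blocks.
-/

open Function

section DiagonalBlocks

variable {α ι : Type*} [MeasurableSpace α] {μ : Measure α}

theorem mul_measure_mul_measure_le_setLIntegral_setLIntegral {s : Set α} (hs : MeasurableSet s)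
    {c : ℝ≥0∞} {K : α → α → ℝ≥0∞} (hK : ∀ x ∈ s, ∀ y ∈ s, c ≤ K x y) :
    c * μ s * μ s ≤ ∫⁻ x in s, ∫⁻ y in s, K x y ∂μ ∂μ :=
  calc c * μ s * μ s = ∫⁻ _ in s, ∫⁻ _ in s, c ∂μ ∂μ := by simp only [setLIntegral_const]
    _ ≤ _ := setLIntegral_mono' hs fun x hx => setLIntegral_mono' hs (hK x hx)

theorem tsum_setLIntegral_setLIntegral_le_lintegral_lintegral [Countable ι] {s : ι → Set α}
    (hs : ∀ i, MeasurableSet (s i)) (hd : Pairwise (Disjoint on s)) (K : α → α → ℝ≥0∞) :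
    ∑' i, ∫⁻ x in s i, ∫⁻ y in s i, K x y ∂μ ∂μ ≤ ∫⁻ x, ∫⁻ y, K x y ∂μ ∂μ :=
  calc ∑' i, ∫⁻ x in s i, ∫⁻ y in s i, K x y ∂μ ∂μ
      ≤ ∑' i, ∫⁻ x in s i, ∫⁻ y, K x y ∂μ ∂μ :=
        ENNReal.tsum_le_tsum fun _ => lintegral_mono fun _ => setLIntegral_le_lintegral _ _
    _ = ∫⁻ x in ⋃ i, s i, ∫⁻ y, K x y ∂μ ∂μ := (lintegral_iUnion hs hd _).symm
    _ ≤ ∫⁻ x, ∫⁻ y, K x y ∂μ ∂μ := setLIntegral_le_lintegral _ _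

end DiagonalBlocks

section StepFunction

variable {α ι : Type*} {s : ι → Set α} (c : ι → ℝ≥0∞)

theorem tsum_indicator_const_apply_of_mem (hs : Pairwise (Disjoint on s)) {i : ι} {x : α}
    (hx : x ∈ s i) : ∑' j, (s j).indicator (fun _ => c j) x = c i := by
  rw [tsum_eq_single i fun j hji => indicator_of_notMem ((hs hji).notMem_of_mem_right hx) _,
    indicator_of_mem hx]

theorem lintegral_tsum_indicator_const [MeasurableSpace α] [Countable ι] {μ : Measure α}
    (hs : ∀ i, MeasurableSet (s i)) :
    ∫⁻ x, ∑' i, (s i).indicator (fun _ => c i) x ∂μ = ∑' i, c i * μ (s i) := by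
  rw [lintegral_tsum fun i => (measurable_const.indicator (hs i)).aemeasurable]
  simp only [lintegral_indicator_const (hs _)]

end StepFunction

theorem ofReal_le_logKernel {t x y : ℝ} (h : |x - y| ≤ Real.exp (-t)) :
    ENNReal.ofReal t ≤ logKernel x y := by
  unfold logKernel
  split_ifs with hxy
  · exact le_top
  · have hpos : 0 < |x - y| := abs_pos.2 (sub_ne_zero.2 hxy)
    have hlog : Real.log |x - y| ≤ -t := by
      simpa using Real.log_le_log hpos h
    refine ENNReal.ofReal_le_ofReal (le_max_of_le_left ?_)
    rw [one_div, Real.log_inv]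
    linarith

namespace InfiniteLogEnergy

noncomputable def width (n : ℕ) : ℝ := Real.exp (-4 ^ (n + 1))

noncomputable def start (n : ℕ) : ℝ := 1 - 2⁻¹ ^ n

def block (n : ℕ) : Set ℝ := Ico (start n) (start n + width n)

noncomputable def height (n : ℕ) : ℝ≥0∞ := 2⁻¹ ^ (n + 1) / ENNReal.ofReal (width n)

noncomputable def density (x : ℝ) : ℝ≥0∞ := ∑' n, (block n).indicator (fun _ => height n) x

theorem width_pos (n : ℕ) : 0 < width n := Real.exp_pos _

theorem width_le (n : ℕ) : width n ≤ 2⁻¹ ^ (n + 1) :=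
  calc width n = (Real.exp (4 ^ (n + 1)))⁻¹ := Real.exp_neg _
    _ ≤ (4 ^ (n + 1))⁻¹ :=
      inv_anti₀ (by positivity) (by linarith [Real.add_one_le_exp (4 ^ (n + 1))])
    _ = 2⁻¹ ^ (2 * (n + 1)) := by rw [pow_mul, inv_pow, inv_pow]; norm_num
    _ ≤ 2⁻¹ ^ (n + 1) := pow_le_pow_of_le_one (by norm_num) (by norm_num) (by omega)

theorem start_add_width_le (n : ℕ) : start n + width n ≤ start (n + 1) := by
  have := width_le n
  rw [pow_succ] at this
  rw [start, start, pow_succ]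
  linarith

theorem monotone_start : Monotone start :=
  monotone_nat_of_le_succ fun n => by linarith [start_add_width_le n, width_pos n]

theorem measurableSet_block (n : ℕ) : MeasurableSet (block n) := measurableSet_Ico

theorem block_subset_Ico (n : ℕ) : block n ⊆ Ico (start n) (start (n + 1)) :=
  Ico_subset_Ico_right (start_add_width_le n)

theorem pairwise_disjoint_block : Pairwise (Disjoint on block) :=
  monotone_start.pairwise_disjoint_on_Ico_succ.mono fun _ _ h =>
    h.mono (block_subset_Ico _) (block_subset_Ico _)

theorem block_subset_Icc (n : ℕ) : block n ⊆ Icc 0 1 := by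
  refine (block_subset_Ico n).trans (Ico_subset_Icc_self.trans (Icc_subset_Icc ?_ ?_))
  · simpa [start] using monotone_start (Nat.zero_le n)
  · simp [start]

theorem volume_block (n : ℕ) : volume (block n) = ENNReal.ofReal (width n) := by
  rw [block, Real.volume_Ico, add_sub_cancel_left]

theorem height_mul_volume_block (n : ℕ) : height n * volume (block n) = 2⁻¹ ^ (n + 1) := by
  rw [volume_block, height,
    ENNReal.div_mul_cancel (by simpa using width_pos n) ENNReal.ofReal_ne_top]

theorem height_ne_top (n : ℕ) : height n ≠ ⊤ :=
  ENNReal.div_ne_top (by simp) (by simpa using width_pos n)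

theorem density_of_mem {n : ℕ} {x : ℝ} (hx : x ∈ block n) : density x = height n :=
  tsum_indicator_const_apply_of_mem _ pairwise_disjoint_block hx

theorem density_of_notMem_Icc {x : ℝ} (hx : x ∉ Icc 0 1) : density x = 0 := by
  simp [density, indicator_of_notMem fun h => hx (block_subset_Icc _ h)]

theorem density_ne_top (x : ℝ) : density x ≠ ⊤ := by
  by_cases hx : ∃ n, x ∈ block n
  · obtain ⟨n, hn⟩ := hx
    rw [density_of_mem hn]
    exact height_ne_top n
  · rw [not_exists] at hx
    simp [density, indicator_of_notMem (hx _)]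

theorem measurable_density : Measurable density :=
  Measurable.tsum fun n => measurable_const.indicator (measurableSet_block n)

theorem lintegral_density : ∫⁻ x, density x = 1 := by
  simp only [density]
  rw [lintegral_tsum_indicator_const _ measurableSet_block]
  simp only [height_mul_volume_block, ENNReal.tsum_geometric_add_one, ENNReal.one_sub_inv_two,
    inv_inv]
  exact ENNReal.inv_mul_cancel two_ne_zero ENNReal.ofNat_ne_top

theorem one_le_energy_on_block (n : ℕ) :
    1 ≤ ∫⁻ x in block n, ∫⁻ y in block n, logKernel x y * density x * density y :=
  calc 1 = 4 ^ (n + 1) * (height n * volume (block n)) * (height n * volume (block n)) := by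
        have h : (4 * 2⁻¹ * 2⁻¹ : ℝ≥0∞) = 1 := by
          rw [show (4 : ℝ≥0∞) = 2 * 2 by norm_num, mul_assoc 2 2,
            ENNReal.mul_inv_cancel two_ne_zero ENNReal.ofNat_ne_top, mul_one,
            ENNReal.mul_inv_cancel two_ne_zero ENNReal.ofNat_ne_top]
        rw [height_mul_volume_block, ← mul_pow, ← mul_pow, h, one_pow]
    _ = ENNReal.ofReal (4 ^ (n + 1)) * height n * height n * volume (block n) *
          volume (block n) := by
        rw [ENNReal.ofReal_pow (by norm_num), ENNReal.ofReal_ofNat]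
        ring
    _ ≤ _ := by
      refine mul_measure_mul_measure_le_setLIntegral_setLIntegral (measurableSet_block n)
        fun x hx y hy => ?_
      rw [density_of_mem hx, density_of_mem hy]
      gcongr
      exact ofReal_le_logKernel <| (Real.dist_le_of_mem_Icc (Ico_subset_Icc_self hx)
        (Ico_subset_Icc_self hy)).trans_eq (add_sub_cancel_left _ _)

theorem hplus_eq_top : Hplus (fun x => (density x).toReal) = ⊤ := by
  simp only [Hplus, ENNReal.ofReal_toReal (density_ne_top _)]
  refine eq_top_iff.2 ?_
  calc ⊤ = ∑' _ : ℕ, (1 : ℝ≥0∞) := (ENNReal.tsum_const_eq_top_of_ne_zero one_ne_zero).symm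
    _ ≤ ∑' n, ∫⁻ x in block n, ∫⁻ y in block n, logKernel x y * density x * density y :=
      ENNReal.tsum_le_tsum one_le_energy_on_block
    _ ≤ _ := tsum_setLIntegral_setLIntegral_le_lintegral_lintegral measurableSet_block
      pairwise_disjoint_block _

end InfiniteLogEnergy

open InfiniteLogEnergy

/-- There exists a nonnegative, compactly supported function `f ∈ L¹(ℝ)` (of unit `L¹`
norm) whose positive logarithmic energy is infinite. -/
theorem exists_integrable_hplus_eq_top :
    ∃ f : ℝ → ℝ, Measurable f ∧ (∀ x, 0 ≤ f x) ∧ HasCompactSupport f ∧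
      Integrable f (volume : Measure ℝ) ∧ (∫ x, f x = 1) ∧ Hplus f = ⊤ := by
  refine ⟨fun x => (density x).toReal, measurable_density.ennreal_toReal,
    fun _ => ENNReal.toReal_nonneg, ?_,
    integrable_toReal_of_lintegral_ne_top measurable_density.aemeasurable
      (by simp [lintegral_density]), ?_, hplus_eq_top⟩
  · exact HasCompactSupport.intro (isCompact_Icc (a := 0) (b := 1)) fun x hx => by
      simp [density_of_notMem_Icc hx]
  · rw [integral_toReal measurable_density.aemeasurable
      (ae_of_all _ fun x => (density_ne_top x).lt_top), lintegral_density, ENNReal.toReal_one]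
end

section
/- For every γ < 1/2 there exists a nonnegative, compactly supported measurable function f : ℝ → ℝ belonging to the Calderón–Zygmund class L(log L)^γ, i.e. satisfying ∫_ℝ f(x)·(log(1 + f(x)))^γ dx < ∞, such that H⁺(f) = ∫_ℝ ∫_ℝ log⁺(1/|x−y|) f(x) f(y) dx dy = +∞. -/
open MeasureTheory Set
open scoped ENNReal

/-!
Place mass `2⁻ⁿ` uniformly on an interval of length `εₙ = exp (-4ⁿ)` inside `[2⁻⁽ⁿ⁺¹⁾, 2⁻ⁿ)`, i.e.
at height `hₙ = exp (4ⁿ) / 2ⁿ`. The self-interaction of the `n`-th piece alone is at least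
`log (1 / εₙ) · (2⁻ⁿ)² = 1`, so `H⁺ = ∞`. On the other hand `log (1 + hₙ) ≤ 4ⁿ⁺¹`, so for
`0 ≤ γ < 1/2` the `L (log L)^γ` integral is at most `∑ 2⁻ⁿ 4^{γ (n + 1)}`, a geometric series
with ratio `4^γ / 2 < 1`.
-/

open Real
open scoped Function

section IndicatorSum

variable {α M : Type*} [AddCommMonoid M] [TopologicalSpace M]

noncomputable def indicatorSum (I : ℕ → Set α) (c : ℕ → M) (x : α) : M :=
  ∑' n, (I n).indicator (fun _ => c n) x

variable {I : ℕ → Set α} {c : ℕ → M} {x : α}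

theorem indicatorSum_eq_of_mem (hI : Pairwise (Disjoint on I)) {n : ℕ} (hx : x ∈ I n) :
    indicatorSum I c x = c n := by
  rw [indicatorSum, tsum_eq_single n fun m hm =>
    indicator_of_notMem (fun hxm => disjoint_left.1 (hI hm) hxm hx) _, indicator_of_mem hx]

theorem indicatorSum_eq_zero (hx : ∀ n, x ∉ I n) : indicatorSum I c x = 0 := by
  simp [indicatorSum, indicator_of_notMem (hx _)]

theorem map_indicatorSum {N : Type*} [AddCommMonoid N] [TopologicalSpace N] (g : M → N)
    (hg : g 0 = 0) (hI : Pairwise (Disjoint on I)) (x : α) :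
    g (indicatorSum I c x) = indicatorSum I (g ∘ c) x := by
  by_cases hx : ∃ n, x ∈ I n
  · obtain ⟨n, hn⟩ := hx
    rw [indicatorSum_eq_of_mem hI hn, indicatorSum_eq_of_mem hI hn, Function.comp_apply]
  · push Not at hx
    rw [indicatorSum_eq_zero hx, indicatorSum_eq_zero hx, hg]

theorem lintegral_indicatorSum [MeasurableSpace α] (μ : Measure α) {c : ℕ → ℝ≥0∞}
    (hI : ∀ n, MeasurableSet (I n)) :
    ∫⁻ x, indicatorSum I c x ∂μ = ∑' n, c n * μ (I n) := by
  simp only [indicatorSum]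
  rw [lintegral_tsum fun n => (measurable_const.indicator (hI n)).aemeasurable]
  exact tsum_congr fun n => lintegral_indicator_const (hI n) _

theorem measurable_indicatorSum [MeasurableSpace α] {c : ℕ → ℝ} (hI : ∀ n, MeasurableSet (I n)) :
    Measurable (indicatorSum I c) :=
  Measurable.tsum fun n => measurable_const.indicator (hI n)

end IndicatorSum

theorem ofReal_log_inv_le_logKernel_s9 {ε x y : ℝ} (hxy : |x - y| ≤ ε) :
    ENNReal.ofReal (log ε⁻¹) ≤ logKernel x y := by
  unfold logKernel
  split_ifs with h
  · exact le_top
  · refine ENNReal.ofReal_le_ofReal (le_max_of_le_left ?_)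
    rw [one_div, log_inv, log_inv, neg_le_neg_iff]
    exact log_le_log (abs_pos.2 (sub_ne_zero.2 h)) hxy

theorem ofReal_le_setLIntegral_energy_Ico {f : ℝ → ℝ} {a ε h : ℝ} (hε : 0 < ε) (hh : 0 ≤ h)
    (hf : ∀ x ∈ Ico a (a + ε), h ≤ f x) :
    ENNReal.ofReal (log ε⁻¹ * (h * ε) ^ 2) ≤
      ∫⁻ x in Ico a (a + ε), ∫⁻ y in Ico a (a + ε),
        logKernel x y * ENNReal.ofReal (f x) * ENNReal.ofReal (f y) := by
  set C := ENNReal.ofReal (log ε⁻¹) * ENNReal.ofReal h * ENNReal.ofReal h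
  have hC : ∀ x ∈ Ico a (a + ε), ∀ y ∈ Ico a (a + ε),
      C ≤ logKernel x y * ENNReal.ofReal (f x) * ENNReal.ofReal (f y) := fun x hx y hy => by
    have hxy : |x - y| ≤ ε := by
      rw [abs_sub_le_iff]; constructor <;> linarith [hx.1, hx.2, hy.1, hy.2]
    exact mul_le_mul' (mul_le_mul' (ofReal_log_inv_le_logKernel_s9 hxy)
      (ENNReal.ofReal_le_ofReal (hf x hx))) (ENNReal.ofReal_le_ofReal (hf y hy))
  calc ENNReal.ofReal (log ε⁻¹ * (h * ε) ^ 2)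
      = C * ENNReal.ofReal ε * ENNReal.ofReal ε := by
        rw [show log ε⁻¹ * (h * ε) ^ 2 = log ε⁻¹ * h * h * ε * ε by ring,
          ENNReal.ofReal_mul' hε.le, ENNReal.ofReal_mul' hε.le, ENNReal.ofReal_mul' hh,
          ENNReal.ofReal_mul' hh]
    _ = ∫⁻ _ in Ico a (a + ε), ∫⁻ _ in Ico a (a + ε), C := by
        simp only [setLIntegral_const, Real.volume_Ico, add_sub_cancel_left]
    _ ≤ _ := setLIntegral_mono' measurableSet_Ico fun x hx =>
        setLIntegral_mono' measurableSet_Ico (hC x hx)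

theorem tsum_setLIntegral_energy_le_Hplus (f : ℝ → ℝ) {S : ℕ → Set ℝ}
    (hS : ∀ n, MeasurableSet (S n)) (hd : Pairwise (Disjoint on S)) :
    ∑' n, ∫⁻ x in S n, ∫⁻ y in S n, logKernel x y * ENNReal.ofReal (f x) * ENNReal.ofReal (f y)
      ≤ Hplus f :=
  calc _ ≤ ∑' n, ∫⁻ x in S n, ∫⁻ y, logKernel x y * ENNReal.ofReal (f x) * ENNReal.ofReal (f y) :=
        ENNReal.tsum_le_tsum fun _ => lintegral_mono fun _ => setLIntegral_le_lintegral _ _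
    _ = ∫⁻ x in ⋃ n, S n, ∫⁻ y, logKernel x y * ENNReal.ofReal (f x) * ENNReal.ofReal (f y) :=
        (lintegral_iUnion hS hd _).symm
    _ ≤ Hplus f := setLIntegral_le_lintegral _ _

namespace LogEnergyCounterexample

noncomputable def width (n : ℕ) : ℝ := exp (-4 ^ n)

noncomputable def height (n : ℕ) : ℝ := exp (4 ^ n) / 2 ^ n

def interval (n : ℕ) : Set ℝ := Ico ((1 / 2) ^ (n + 1)) ((1 / 2) ^ (n + 1) + width n)

noncomputable def spikes : ℝ → ℝ := indicatorSum interval height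

theorem width_pos (n : ℕ) : 0 < width n := exp_pos _

theorem height_pos (n : ℕ) : 0 < height n := by unfold height; positivity

theorem height_mul_width (n : ℕ) : height n * width n = (1 / 2) ^ n := by
  rw [height, width, div_mul_eq_mul_div, ← exp_add, add_neg_cancel, exp_zero, one_div_pow]

theorem log_inv_width (n : ℕ) : log (width n)⁻¹ = 4 ^ n := by
  rw [width, ← exp_neg, neg_neg, log_exp]

theorem width_le (n : ℕ) : width n ≤ (1 / 2) ^ (n + 1) := by
  have h4 : (4 : ℝ) ^ n = (2 ^ n) ^ 2 := by rw [← pow_mul, mul_comm, pow_mul]; norm_num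
  have h2 : (2 : ℝ) ^ (n + 1) ≤ exp (4 ^ n) := by
    rw [pow_succ, h4]
    nlinarith [add_one_le_exp (((2 : ℝ) ^ n) ^ 2), sq_nonneg ((2 : ℝ) ^ n - 1)]
  rw [width, exp_neg, one_div_pow, one_div]
  exact inv_anti₀ (by positivity) h2

theorem interval_subset_Ico (n : ℕ) : interval n ⊆ Ico ((1 / 2) ^ (n + 1)) ((1 / 2) ^ n) :=
  Ico_subset_Ico_right <| by linarith [width_le n, pow_succ (1 / 2 : ℝ) n]

theorem pairwise_disjoint_interval : Pairwise (Disjoint on interval) :=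
  ((pow_right_anti₀ (by norm_num) (by norm_num) : Antitone fun n : ℕ => (1 / 2 : ℝ) ^ n)
    |>.pairwise_disjoint_on_Ico_succ).mono fun _ _ h =>
      h.mono (interval_subset_Ico _) (interval_subset_Ico _)

theorem interval_subset_Icc (n : ℕ) : interval n ⊆ Icc 0 1 :=
  (interval_subset_Ico n).trans <| Ico_subset_Icc_self.trans <|
    Icc_subset_Icc (by positivity) (pow_le_one₀ (by norm_num) (by norm_num))

theorem measurable_spikes : Measurable spikes :=
  measurable_indicatorSum fun _ => measurableSet_Ico

theorem spikes_nonneg (x : ℝ) : 0 ≤ spikes x :=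
  tsum_nonneg fun n => indicator_nonneg (fun _ _ => (height_pos n).le) x

theorem hasCompactSupport_spikes : HasCompactSupport spikes :=
  HasCompactSupport.intro isCompact_Icc fun _ hx =>
    indicatorSum_eq_zero fun n hn => hx (interval_subset_Icc n hn)

theorem log_one_add_height_mem (n : ℕ) : log (1 + height n) ∈ Icc 1 (4 ^ (n + 1)) := by
  have hn : (n : ℝ) + 1 ≤ 4 ^ n := by
    exact_mod_cast (Nat.lt_two_pow_self (n := n)).trans_le (Nat.pow_le_pow_left (by norm_num) n)
  have hlog2 : log 2 ≤ 1 := by linarith [log_two_lt_d9]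
  have hh : height n ≤ exp (4 ^ n) := div_le_self (exp_pos _).le (one_le_pow₀ one_le_two)
  have h1 : (1 : ℝ) ≤ exp (4 ^ n) := one_le_exp (by positivity)
  constructor
  · calc (1 : ℝ) ≤ 4 ^ n - n * log 2 := by nlinarith [(n.cast_nonneg : (0 : ℝ) ≤ n)]
      _ = log (height n) := by
        rw [height, log_div (exp_pos _).ne' (by positivity), log_exp, log_pow]
      _ ≤ log (1 + height n) := log_le_log (height_pos n) (by linarith)
  · calc log (1 + height n) ≤ log (2 * exp (4 ^ n)) :=
          log_le_log (by linarith [height_pos n]) (by linarith)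
      _ = log 2 + 4 ^ n := by rw [log_mul two_ne_zero (exp_pos _).ne', log_exp]
      _ ≤ 4 ^ (n + 1) := by rw [pow_succ]; linarith

theorem log_one_add_height_rpow_le {γ δ : ℝ} (hγδ : γ ≤ δ) (hδ : 0 ≤ δ) (n : ℕ) :
    log (1 + height n) ^ γ ≤ ((4 : ℝ) ^ δ) ^ (n + 1) := by
  obtain ⟨hlo, hhi⟩ := log_one_add_height_mem n
  calc log (1 + height n) ^ γ ≤ log (1 + height n) ^ δ := rpow_le_rpow_of_exponent_le hlo hγδ
    _ ≤ ((4 : ℝ) ^ (n + 1)) ^ δ := rpow_le_rpow (by linarith) hhi hδ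
    _ = ((4 : ℝ) ^ δ) ^ (n + 1) := (rpow_pow_comm (by norm_num) δ (n + 1)).symm

theorem lintegral_spikes_mul_log_rpow_lt_top {γ : ℝ} (hγ : γ < 1 / 2) :
    ∫⁻ x, ENNReal.ofReal (spikes x * log (1 + spikes x) ^ γ) < ⊤ := by
  -- `rpow_le_rpow` only applies to nonnegative exponents
  set δ := max γ 0
  have hq : (4 : ℝ) ^ δ < 2 := by
    calc (4 : ℝ) ^ δ < 4 ^ (1 / 2 : ℝ) :=
          rpow_lt_rpow_of_exponent_lt (by norm_num) (max_lt hγ (by norm_num))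
      _ = 2 := by rw [show (4 : ℝ) = 2 ^ (2 : ℝ) by norm_num, ← rpow_mul zero_le_two]; norm_num
  have hsum : Summable fun n : ℕ => 4 ^ δ * (4 ^ δ / 2 : ℝ) ^ n :=
    (summable_geometric_of_lt_one (by positivity) (by linarith)).mul_left _
  have hterm (n : ℕ) : ENNReal.ofReal (height n * log (1 + height n) ^ γ) * volume (interval n)
      ≤ ENNReal.ofReal (4 ^ δ * (4 ^ δ / 2 : ℝ) ^ n) := by
    rw [interval, Real.volume_Ico, add_sub_cancel_left,
      ← ENNReal.ofReal_mul (mul_nonneg (height_pos n).le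
        (rpow_nonneg (zero_le_one.trans (log_one_add_height_mem n).1) _))]
    refine ENNReal.ofReal_le_ofReal ?_
    calc height n * log (1 + height n) ^ γ * width n
        = (1 / 2) ^ n * log (1 + height n) ^ γ := by rw [← height_mul_width]; ring
      _ ≤ (1 / 2) ^ n * ((4 : ℝ) ^ δ) ^ (n + 1) := by
        gcongr; exact log_one_add_height_rpow_le (le_max_left γ 0) (le_max_right γ 0) n
      _ = 4 ^ δ * (4 ^ δ / 2) ^ n := by ring
  calc ∫⁻ x, ENNReal.ofReal (spikes x * log (1 + spikes x) ^ γ)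
      = ∫⁻ x, indicatorSum interval
          (fun n => ENNReal.ofReal (height n * log (1 + height n) ^ γ)) x :=
        lintegral_congr fun x => map_indicatorSum (fun t => ENNReal.ofReal (t * log (1 + t) ^ γ))
          (by simp) pairwise_disjoint_interval x
    _ = ∑' n, ENNReal.ofReal (height n * log (1 + height n) ^ γ) * volume (interval n) :=
        lintegral_indicatorSum _ fun _ => measurableSet_Ico
    _ ≤ ∑' n, ENNReal.ofReal (4 ^ δ * (4 ^ δ / 2 : ℝ) ^ n) := ENNReal.tsum_le_tsum hterm
    _ = ENNReal.ofReal (∑' n, 4 ^ δ * (4 ^ δ / 2 : ℝ) ^ n) :=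
        (ENNReal.ofReal_tsum_of_nonneg (fun _ => by positivity) hsum).symm
    _ < ⊤ := ENNReal.ofReal_lt_top

theorem Hplus_spikes : Hplus spikes = ⊤ := by
  have hE : ∀ n, 1 ≤ ∫⁻ x in interval n, ∫⁻ y in interval n,
      logKernel x y * ENNReal.ofReal (spikes x) * ENNReal.ofReal (spikes y) := fun n => by
    calc (1 : ℝ≥0∞) = ENNReal.ofReal (log (width n)⁻¹ * (height n * width n) ^ 2) := by
          rw [log_inv_width, height_mul_width, ← pow_mul, mul_comm n, pow_mul, ← mul_pow]
          norm_num
      _ ≤ _ := ofReal_le_setLIntegral_energy_Ico (width_pos n) (height_pos n).le fun x hx =>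
          (indicatorSum_eq_of_mem pairwise_disjoint_interval hx).ge
  refine eq_top_iff.2 ?_
  calc ⊤ = ∑' _ : ℕ, (1 : ℝ≥0∞) := (ENNReal.tsum_const_eq_top_of_ne_zero one_ne_zero).symm
    _ ≤ _ := ENNReal.tsum_le_tsum hE
    _ ≤ Hplus spikes := tsum_setLIntegral_energy_le_Hplus spikes (fun _ => measurableSet_Ico)
        pairwise_disjoint_interval

end LogEnergyCounterexample

/-- For every `γ < 1/2` there exists a nonnegative, compactly supported, measurable
function `f` in the Calderón–Zygmund class `L(log L)^γ`, i.e. with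
`∫ f (log(1+f))^γ < ∞`, such that `H⁺(f) = +∞`. -/
theorem exists_logL_gamma_hplus_eq_top (γ : ℝ) (hγ : γ < 1 / 2) :
    ∃ f : ℝ → ℝ, Measurable f ∧ (∀ x, 0 ≤ f x) ∧ HasCompactSupport f ∧
      (∫⁻ x, ENNReal.ofReal (f x * Real.log (1 + f x) ^ γ) < ⊤) ∧ Hplus f = ⊤ :=
  open LogEnergyCounterexample in
  ⟨spikes, measurable_spikes, spikes_nonneg, hasCompactSupport_spikes,
    lintegral_spikes_mul_log_rpow_lt_top hγ, Hplus_spikes⟩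
end
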